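/- arXiv:2110.15038 — 2 statements merged into one kernel-verified Lean document; each statement's English description precedes it below -/
import Mathlib

section
/- Let n : ℝ^{1+d} → ℝ³ be six times continuously differentiable. Then at every point, n·□³n + ∂_μ□n·∂^μ□n = Σ_μ ∂_μ V^μ, where V^μ := η^{μν}( n·∂_ν□²n − ∂_νn·□²n + □n·∂_ν□n ). In other words, the combination of the dimension-6 two-field operators F₆₁ = n·□³n and F₆₆ = ∂_μ□n·∂^μ□n given by F₆₁ + F₆₆ is a total derivative. -/
open Matrix

/-- The partial derivative `∂_μ f` of a function on `ℝ^m` in the `μ`-th coordinate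
direction. -/
noncomputable def pd {m : ℕ} {F : Type*} [NormedAddCommGroup F] [NormedSpace ℝ F]
    (μ : Fin m) (f : (Fin m → ℝ) → F) (x : Fin m → ℝ) : F :=
  fderiv ℝ f x (Pi.single μ 1)

/-- The Minkowski metric `η = diag(−1,+1,…,+1)` on `ℝ^{1+d}`. -/
def eta (d : ℕ) (μ ν : Fin (d+1)) : ℝ :=
  if μ = ν then (if (μ : ℕ) = 0 then -1 else 1) else 0

/-- The d'Alembertian `□ = η^{μν}∂_μ∂_ν`, applied componentwise. -/
noncomputable def box {d : ℕ} {F : Type*} [NormedAddCommGroup F] [NormedSpace ℝ F]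
    (f : (Fin (d+1) → ℝ) → F) : (Fin (d+1) → ℝ) → F :=
  fun x => ∑ μ : Fin (d+1), ∑ ν : Fin (d+1), eta d μ ν • pd μ (pd ν f) x

/-!
Write `J^μ(u, w) = u · ∂^μ w`. By the Leibniz rule `∂_μ J^μ(u, w) = ∂_μ u · ∂^μ w + u · □w`,
and the first term is symmetric in `u, w`. The current of the statement is
`V = J(n, □²n) − J(□²n, n) + J(□n, □n)`, so
`∂_μ V^μ = n · □³n − □²n · □n + ∂_μ □n · ∂^μ □n + □n · □²n = F₆₁ + F₆₆`.
-/

section PartialDerivatives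

variable {m : ℕ} {F : Type*} [NormedAddCommGroup F] [NormedSpace ℝ F] {x : Fin m → ℝ}

lemma pd_contDiff {k : WithTop ℕ∞} {f : (Fin m → ℝ) → F} (hf : ContDiff ℝ (k + 1) f)
    (μ : Fin m) : ContDiff ℝ k (pd μ f) :=
  (hf.fderiv_right le_rfl).clm_apply contDiff_const

lemma differentiableAt_pd {f : (Fin m → ℝ) → F} (hf : ContDiff ℝ 2 f) (μ : Fin m) :
    DifferentiableAt ℝ (pd μ f) x :=
  (pd_contDiff (k := 1) hf μ).differentiable one_ne_zero x

lemma pd_add {f g : (Fin m → ℝ) → F} (hf : DifferentiableAt ℝ f x)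
    (hg : DifferentiableAt ℝ g x) (μ : Fin m) :
    pd μ (fun y => f y + g y) x = pd μ f x + pd μ g x := by
  simp [pd, fderiv_fun_add hf hg]

lemma pd_sub {f g : (Fin m → ℝ) → F} (hf : DifferentiableAt ℝ f x)
    (hg : DifferentiableAt ℝ g x) (μ : Fin m) :
    pd μ (fun y => f y - g y) x = pd μ f x - pd μ g x := by
  simp [pd, fderiv_fun_sub hf hg]

lemma pd_sum_const_mul {ι : Type*} (s : Finset ι) (c : ι → ℝ) {f : ι → (Fin m → ℝ) → ℝ}
    (hf : ∀ i ∈ s, DifferentiableAt ℝ (f i) x) (μ : Fin m) :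
    pd μ (fun y => ∑ i ∈ s, c i * f i y) x = ∑ i ∈ s, c i * pd μ (f i) x := by
  simp only [pd, fderiv_fun_sum fun i hi => (hf i hi).const_mul (c i),
    FunLike.coe_sum, Finset.sum_apply]
  exact Finset.sum_congr rfl fun i hi => by simp [fderiv_const_mul (hf i hi)]

variable {ι : Type*} [Fintype ι]

lemma DifferentiableAt.dotProduct {f g : (Fin m → ℝ) → ι → ℝ} (hf : DifferentiableAt ℝ f x)
    (hg : DifferentiableAt ℝ g x) : DifferentiableAt ℝ (fun y => f y ⬝ᵥ g y) x := by
  unfold _root_.dotProduct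
  fun_prop

lemma pd_dotProduct {f g : (Fin m → ℝ) → ι → ℝ} (hf : DifferentiableAt ℝ f x)
    (hg : DifferentiableAt ℝ g x) (μ : Fin m) :
    pd μ (fun y => f y ⬝ᵥ g y) x = pd μ f x ⬝ᵥ g x + f x ⬝ᵥ pd μ g x := by
  have hfi (i : ι) : DifferentiableAt ℝ (fun y => f y i) x := by fun_prop
  have hgi (i : ι) : DifferentiableAt ℝ (fun y => g y i) x := by fun_prop
  unfold pd dotProduct
  rw [fderiv_fun_sum fun i _ => (hfi i).fun_mul (hgi i)]
  simp [fderiv_fun_mul (hfi _) (hgi _), fderiv_apply hf, fderiv_apply hg, Finset.sum_add_distrib,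
    mul_comm, add_comm]

end PartialDerivatives

section Minkowski

variable {d : ℕ} {ι : Type*} [Fintype ι]

lemma eta_comm (μ ν : Fin (d+1)) : eta d μ ν = eta d ν μ := by
  unfold eta
  split_ifs <;> simp_all

lemma box_contDiff {k : WithTop ℕ∞} {F : Type*} [NormedAddCommGroup F] [NormedSpace ℝ F]
    {f : (Fin (d+1) → ℝ) → F} (hf : ContDiff ℝ (k + 2) f) : ContDiff ℝ k (box f) := by
  rw [show k + 2 = k + 1 + 1 by rw [add_assoc, one_add_one_eq_two]] at hf
  exact ContDiff.sum fun μ _ => ContDiff.sum fun ν _ =>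
    (pd_contDiff (pd_contDiff hf ν) μ).const_smul _

lemma dotProduct_box (v : ι → ℝ) (f : (Fin (d+1) → ℝ) → ι → ℝ) (x : Fin (d+1) → ℝ) :
    v ⬝ᵥ box f x = ∑ μ, ∑ ν, eta d μ ν * (v ⬝ᵥ pd μ (pd ν f) x) := by
  simp [box, dotProduct_sum, dotProduct_smul]

/-- `∂_μ u · ∂^μ w`. -/
noncomputable def gradPairing (u w : (Fin (d+1) → ℝ) → ι → ℝ) (x : Fin (d+1) → ℝ) : ℝ :=
  ∑ μ, ∑ ν, eta d μ ν * (pd μ u x ⬝ᵥ pd ν w x)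

lemma gradPairing_comm (u w : (Fin (d+1) → ℝ) → ι → ℝ) (x : Fin (d+1) → ℝ) :
    gradPairing u w x = gradPairing w u x := by
  unfold gradPairing
  rw [Finset.sum_comm]
  simp [eta_comm, dotProduct_comm]

/-- `J^μ(u, w) = u · ∂^μ w`. -/
noncomputable def current (u w : (Fin (d+1) → ℝ) → ι → ℝ) (μ : Fin (d+1))
    (y : Fin (d+1) → ℝ) : ℝ :=
  ∑ ν, eta d μ ν * (u y ⬝ᵥ pd ν w y)

variable {u w : (Fin (d+1) → ℝ) → ι → ℝ} {x : Fin (d+1) → ℝ}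

lemma differentiableAt_current (hu : DifferentiableAt ℝ u x) (hw : ContDiff ℝ 2 w)
    (μ : Fin (d+1)) : DifferentiableAt ℝ (current u w μ) x :=
  DifferentiableAt.fun_sum fun ν _ => (hu.dotProduct (differentiableAt_pd hw ν)).const_mul _

lemma sum_pd_current (hu : DifferentiableAt ℝ u x) (hw : ContDiff ℝ 2 w) :
    ∑ μ, pd μ (current u w μ) x = gradPairing u w x + u x ⬝ᵥ box w x := by
  have hleibniz (μ : Fin (d+1)) : pd μ (current u w μ) x
      = ∑ ν, eta d μ ν * (pd μ u x ⬝ᵥ pd ν w x + u x ⬝ᵥ pd μ (pd ν w) x) := by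
    unfold current
    rw [pd_sum_const_mul _ _ fun ν _ => hu.dotProduct (differentiableAt_pd hw ν)]
    simp only [pd_dotProduct hu (differentiableAt_pd hw _)]
  simp only [hleibniz, mul_add, Finset.sum_add_distrib, gradPairing, dotProduct_box]

end Minkowski

/-- the combination `F₆₁ + F₆₆ = n·□³n + ∂_μ□n·∂^μ□n` is a total
derivative: it equals `∂_μ V^μ` with
`V^μ = η^{μν}(n·∂_ν□²n − ∂_νn·□²n + □n·∂_ν□n)`. -/
theorem F61_plus_F66_total_derivative {d : ℕ}
    (n : (Fin (d+1) → ℝ) → (Fin 3 → ℝ)) (hn : ContDiff ℝ 6 n) :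
    ∀ x : Fin (d+1) → ℝ,
      n x ⬝ᵥ box (box (box n)) x
        + (∑ μ : Fin (d+1), ∑ ν : Fin (d+1),
            eta d μ ν * (pd μ (box n) x ⬝ᵥ pd ν (box n) x))
      = ∑ μ : Fin (d+1),
          pd μ (fun y => ∑ ν : Fin (d+1),
            eta d μ ν * (n y ⬝ᵥ pd ν (box (box n)) y
              - pd ν n y ⬝ᵥ box (box n) y
              + box n y ⬝ᵥ pd ν (box n) y)) x := by
  intro x
  have hB1 : ContDiff ℝ 4 (box n) := box_contDiff hn
  have hB2 : ContDiff ℝ 2 (box (box n)) := box_contDiff hB1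
  have hn2 : ContDiff ℝ 2 n := hn.of_le (by norm_num)
  have hB1' : ContDiff ℝ 2 (box n) := hB1.of_le (by norm_num)
  have hdiff {f : (Fin (d+1) → ℝ) → Fin 3 → ℝ} (hf : ContDiff ℝ 2 f) :
      DifferentiableAt ℝ f x :=
    hf.differentiable two_ne_zero x
  have hJ {u w : (Fin (d+1) → ℝ) → Fin 3 → ℝ} (hu : ContDiff ℝ 2 u) (hw : ContDiff ℝ 2 w)
      (μ : Fin (d+1)) : DifferentiableAt ℝ (current u w μ) x :=
    differentiableAt_current (hdiff hu) hw μ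
  have hdiv (μ : Fin (d+1)) : pd μ (fun y => ∑ ν : Fin (d+1),
      eta d μ ν * (n y ⬝ᵥ pd ν (box (box n)) y - pd ν n y ⬝ᵥ box (box n) y
        + box n y ⬝ᵥ pd ν (box n) y)) x
      = pd μ (current n (box (box n)) μ) x - pd μ (current (box (box n)) n μ) x
        + pd μ (current (box n) (box n) μ) x := by
    rw [← pd_sub (hJ hn2 hB2 μ) (hJ hB2 hn2 μ),
      ← pd_add ((hJ hn2 hB2 μ).fun_sub (hJ hB2 hn2 μ)) (hJ hB1' hB1' μ)]
    congr 1
    funext y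
    simp only [current, dotProduct_comm (pd _ n y), ← Finset.sum_sub_distrib,
      ← Finset.sum_add_distrib, mul_sub, mul_add]
  rw [Finset.sum_congr rfl fun μ _ => hdiv μ, Finset.sum_add_distrib, Finset.sum_sub_distrib,
    sum_pd_current (hdiff hn2) hB2, sum_pd_current (hdiff hB2) hn2,
    sum_pd_current (hdiff hB1') hB1',
    gradPairing_comm (box (box n)), dotProduct_comm (box (box n) x)]
  unfold gradPairing
  ring
end

section
/- Let A, B ∈ ℝ and ρ > 0 with B ≠ 0 and A < 2|B|ρ². Then the function f : ℝ² → ℝ defined by f(r, θ) = A(r² + ρ²θ²)³ + 2Bρ²(r² + ρ²θ²)²(r² − ρ²θ²) is not bounded below: for every C ∈ ℝ there exists (r, θ) ∈ ℝ² with f(r, θ) < C. (If B > 0 this is the 'spiral instability', realized by r = 0 and θ → ∞; if B < 0 it is the 'runaway instability', realized by θ = 0 and r → ∞.) -/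
lemma aux_neg_pow6 (c C : ℝ) (hc : c < 0) : ∃ t : ℝ, c * t^6 < C := by
  refine ⟨max 1 ((|C| + 1) / (-c)), ?_⟩
  set t := max 1 ((|C| + 1) / (-c)) with ht
  have h1 : (1:ℝ) ≤ t := le_max_left _ _
  have h2 : (|C| + 1) / (-c) ≤ t := le_max_right _ _
  have hc' : 0 < -c := by linarith
  have h3 : |C| + 1 ≤ (-c) * t := by
    rw [mul_comm]
    exact (div_le_iff₀ hc').mp h2
  have h6 : t ≤ t^6 := le_self_pow₀ (by linarith) (by norm_num)
  have : |C| + 1 ≤ (-c) * t^6 := by nlinarith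
  have hC : -|C| ≤ C := neg_abs_le C
  nlinarith

/-- the spiral/runaway instability of the order-`Λ⁻⁴` theory:
if `B ≠ 0` and `A < 2|B|ρ²`, the reduced Hamiltonian density
`f(r,θ) = A(r²+ρ²θ²)³ + 2Bρ²(r²+ρ²θ²)²(r²−ρ²θ²)` is unbounded below. -/
theorem spiral_or_runaway_instability (A B ρ : ℝ) (hρ : 0 < ρ) (hB : B ≠ 0)
    (hAB : A < 2 * |B| * ρ^2) :
    ∀ C : ℝ, ∃ r θ : ℝ,
      A * (r^2 + ρ^2*θ^2)^3
        + 2 * B * ρ^2 * (r^2 + ρ^2*θ^2)^2 * (r^2 - ρ^2*θ^2) < C := by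
  intro C
  rcases lt_or_gt_of_ne hB with hBneg | hBpos
  · -- runaway: θ = 0
    have habs : |B| = -B := abs_of_neg hBneg
    have hc : A + 2 * B * ρ^2 < 0 := by rw [habs] at hAB; linarith
    obtain ⟨t, ht⟩ := aux_neg_pow6 (A + 2 * B * ρ^2) C hc
    exact ⟨t, 0, by ring_nf; ring_nf at ht; linarith⟩
  · -- spiral: r = 0
    have habs : |B| = B := abs_of_pos hBpos
    have hc : (A - 2 * B * ρ^2) < 0 := by rw [habs] at hAB; linarith
    have hc' : (A - 2 * B * ρ^2) * ρ^6 < 0 :=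
      mul_neg_of_neg_of_pos hc (by positivity)
    obtain ⟨t, ht⟩ := aux_neg_pow6 ((A - 2 * B * ρ^2) * ρ^6) C hc'
    exact ⟨0, t, by ring_nf; ring_nf at ht; linarith⟩
end
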